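/- For any Hermitian positive definite D ∈ ℂ^{NQ×NQ} and g ∈ ℂ^{NQ} arising from the mixed-ADC model with K ≥ 1 (at least one antenna with a high-resolution ADC), in the simplified case where only the K selected antennas are used (antenna selection), the GMI equals −log((1/Q) Σ_q 1/(1 + ℰ_s Σ_{n ∈ S} |λ_{nq}|²)) for the selected set S with |S| = K, which tends to +∞ as ℰ_s → ∞ provided Σ_{n∈S} |λ_{nq}|² > 0 for every q. -/

import Mathlib

/-!
Each summand `1 / (1 + ℰ_s a_q)` with `a_q > 0` tends to `0` from above as `ℰ_s → ∞`, hence so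
does their positive average; since `log` tends to `-∞` at `0⁺`, the GMI tends to `+∞`.
-/

open Filter Topology

section NhdsGTZero

variable {𝕜 α : Type*} [Field 𝕜] [LinearOrder 𝕜] [IsStrictOrderedRing 𝕜] [TopologicalSpace 𝕜]
  [OrderTopology 𝕜] {l : Filter α}

theorem Filter.Tendsto.const_mul_nhdsGT_zero {f : α → 𝕜} {c : 𝕜} (hc : 0 < c)
    (h : Tendsto f l (𝓝[>] 0)) : Tendsto (fun x => c * f x) l (𝓝[>] 0) := by
  rw [tendsto_nhdsWithin_iff] at h ⊢
  exact ⟨by simpa using h.1.const_mul c, h.2.mono fun x hx => mul_pos hc hx⟩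

theorem tendsto_finsetSum_nhdsGT_zero {ι : Type*} {s : Finset ι} (hs : s.Nonempty)
    {f : ι → α → 𝕜} (h : ∀ i ∈ s, Tendsto (f i) l (𝓝[>] 0)) :
    Tendsto (fun x => ∑ i ∈ s, f i x) l (𝓝[>] 0) := by
  simp only [tendsto_nhdsWithin_iff] at h ⊢
  refine ⟨by simpa using tendsto_finsetSum s fun i hi => (h i hi).1, ?_⟩
  exact (s.eventually_all.2 fun i hi => (h i hi).2).mono fun x hx => Finset.sum_pos hx hs

theorem tendsto_one_div_one_add_mul_atTop_nhdsGT_zero {c : 𝕜} (hc : 0 < c) :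
    Tendsto (fun x : 𝕜 => 1 / (1 + x * c)) atTop (𝓝[>] 0) := by
  simp only [one_div]
  exact tendsto_inv_atTop_nhdsGT_zero.comp
    (tendsto_atTop_add_const_left _ 1 (tendsto_id.atTop_mul_const hc))

end NhdsGTZero

theorem antenna_selection_gmi_unbounded_general (N Q : ℕ) (hQ : 0 < Q)
    (lam : Fin N → Fin Q → ℂ) (S : Finset (Fin N))
    (hpos : ∀ q : Fin Q, 0 < ∑ n ∈ S, ‖lam n q‖ ^ 2) :
    Tendsto (fun Es : ℝ =>
        -Real.log ((1 / Q) * ∑ q : Fin Q, 1 / (1 + Es * ∑ n ∈ S, ‖lam n q‖ ^ 2)))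
      atTop atTop := by
  have havg : Tendsto (fun Es : ℝ =>
      (1 / Q : ℝ) * ∑ q : Fin Q, 1 / (1 + Es * ∑ n ∈ S, ‖lam n q‖ ^ 2)) atTop (𝓝[>] 0) :=
    (tendsto_finsetSum_nhdsGT_zero ⟨⟨0, hQ⟩, Finset.mem_univ _⟩ fun q _ =>
      tendsto_one_div_one_add_mul_atTop_nhdsGT_zero (hpos q)).const_mul_nhdsGT_zero
        (by positivity)
  exact tendsto_neg_atBot_atTop.comp (Real.tendsto_log_nhdsGT_zero.comp havg)

/-- For antenna selection with `K ≥ 1` high-resolution ADCs over the selected set `S`,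
the GMI `−log((1/Q) Σ_q 1/(1 + ℰ_s Σ_{n∈S} |λ_{nq}|²))` tends to `+∞` as `ℰ_s → ∞`
provided `Σ_{n∈S} |λ_{nq}|² > 0` for every subcarrier `q`. -/
theorem antenna_selection_gmi_unbounded (N Q K : ℕ) (hQ : 0 < Q) (hK : 1 ≤ K)
    (lam : Fin N → Fin Q → ℂ) (S : Finset (Fin N)) (hS : S.card = K)
    (hpos : ∀ q : Fin Q, 0 < ∑ n ∈ S, ‖lam n q‖ ^ 2) :
    Tendsto (fun Es : ℝ =>
        -Real.log ((1 / Q) * ∑ q : Fin Q, 1 / (1 + Es * ∑ n ∈ S, ‖lam n q‖ ^ 2)))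
      atTop atTop :=
  antenna_selection_gmi_unbounded_general N Q hQ lam S hpos
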